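/- Let N(t) = (x(t) − c(t))/σ(t) with σ(t) ≠ 0, all differentiable. If the adaptation laws ċ = ẋ + (x − c)·a and σ̇ = −σ·(1 + (σ/(x−c))²)·a hold at time t (with x(t) ≠ c(t)) for some real a, then N(t)·N'(t) = a. -/
import Mathlib


theorem stmt_8 (c σ x : ℝ → ℝ) (hc : Differentiable ℝ c) (hσ : Differentiable ℝ σ)
    (hx : Differentiable ℝ x) (hσ0 : ∀ t, σ t ≠ 0) (a t : ℝ)
    (hxc : x t ≠ c t)
    (hcdot : deriv c t = deriv x t + (x t - c t) * a)
    (hσdot : deriv σ t = -σ t * (1 + (σ t / (x t - c t)) ^ 2) * a) :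
    ((x t - c t) / σ t) * deriv (fun τ => (x τ - c τ) / σ τ) t = a := by
  have hderiv : deriv (fun τ => (x τ - c τ) / σ τ) t
      = (deriv (fun τ => x τ - c τ) t * σ t - (x t - c t) * deriv σ t) / σ t ^ 2 :=
    deriv_div ((hx t).sub (hc t)) (hσ t) (hσ0 t)
  have hsub : deriv (fun τ => x τ - c τ) t = deriv x t - deriv c t :=
    deriv_sub (hx t) (hc t)
  rw [hderiv, hsub, hcdot, hσdot]
  have h1 : x t - c t ≠ 0 := sub_ne_zero.mpr hxc
  field_simp [hσ0 t, h1]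
  ring
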